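/- Suppose the induced endogenous distribution Q is strictly positive. Then for every x ∈ Π_i X_i one has Q(x) = Π_{e∈E} Π_{k=1}^{m_e} Q(x_{i_k} = x_{i_k} ∣ T_k^e = x↾T_k^e), where for each e ∈ E and 1 ≤ k ≤ m_e, T_k^e := {i_1,…,i_{k−1}} ∪ pa(i_1) ∪ … ∪ pa(i_k). (The endogenous distribution of a quasi-Markovian model factorizes over the confounded components determined by the exogenous variables.) -/

import Mathlib

/-!
Imposing only the structural equations of the variables `j < m` gives a function
`G_m = truncJoint pa c f q (below m)` of `x` which, because parents precede their children, is
the marginal of `Q` on `{j < m}`: summing out the last variable `m` only sees its own equation,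
which holds for exactly one value. As the exogenous variables are independent, `G_m` splits into
one factor per `e ∈ E`, and the factor of `e` depends on `x` only through the children of `e`
below `m` and their parents. Hence `Q = G_n / G_0 = ∏ᵢ G_{i+1} / G_i`, and for `i = i_k` the step
from `G_i` to `G_{i+1}` changes only the factor of `e = c(i)`, which depends on `x` only through
`{i} ∪ T_k^e`. Summing out the variables below `i` outside `T_k^e` therefore gives the same ratio
for the marginals on `{i} ∪ T_k^e` and `T_k^e`, i.e. `G_{i+1} / G_i = Q(x_i ∣ T_k^e)`;
regrouping the product over `i` by exogenous parent gives the theorem.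
-/

open Finset
open scoped Classical

variable {n : ℕ}

/-- Restriction of a joint endogenous configuration `x` to the coordinates in `S`. -/
def restr {X : Fin n → Type} (S : Finset (Fin n)) (x : ∀ i, X i) : ∀ j : S, X j :=
  fun j => x j

/-- Marginal of `R` over the coordinates in `S`. -/
noncomputable def marg {X : Fin n → Type} [∀ i, Fintype (X i)]
    (R : (∀ i, X i) → ℝ) (S : Finset (Fin n)) (v : ∀ j : S, X j) : ℝ :=
  ∑ x : ∀ i, X i, if restr S x = v then R x else 0

/-- Conditional probability `R(x_i = a | S = v)`. -/
noncomputable def cpr {X : Fin n → Type} [∀ i, Fintype (X i)]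
    (R : (∀ i, X i) → ℝ) (i : Fin n) (S : Finset (Fin n)) (a : X i) (v : ∀ j : S, X j) : ℝ :=
  (∑ x : ∀ i, X i, if x i = a ∧ restr S x = v then R x else 0) / marg R S v

/-- Restriction along an inclusion of index sets. -/
def restr2 {X : Fin n → Type} {S T : Finset (Fin n)} (h : S ⊆ T) (v : ∀ j : T, X j) :
    ∀ j : S, X j :=
  fun j => v ⟨j, h j.2⟩

/-- The endogenous children of the exogenous variable `e`. -/
noncomputable def childSet {E : Type} [Fintype E] (c : Fin n → E) (e : E) : Finset (Fin n) :=
  univ.filter (fun i => c i = e)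

/-- Enumeration `i_1 < … < i_{m_e}` of the children of `e` in increasing order. -/
noncomputable def ch {E : Type} [Fintype E] (c : Fin n → E) (e : E) :
    Fin (childSet c e).card → Fin n :=
  fun k => (childSet c e).orderEmbOfFin rfl k

lemma ch_mem_childSet {E : Type} [Fintype E] (c : Fin n → E) (e : E)
    (k : Fin (childSet c e).card) : ch c e k ∈ childSet c e :=
  Finset.orderEmbOfFin_mem _ rfl k

lemma c_ch {E : Type} [Fintype E] (c : Fin n → E) (e : E)
    (k : Fin (childSet c e).card) : c (ch c e k) = e := by
  have h := ch_mem_childSet c e k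
  simpa [childSet] using h

/-- Cast of a state of `U e` to a state of the exogenous parent of the `k`-th child of `e`. -/
noncomputable def uCast {E : Type} [Fintype E] (U : E → Type) (c : Fin n → E) (e : E)
    (k : Fin (childSet c e).card) (u : U e) : U (c (ch c e k)) :=
  cast (congrArg U (c_ch c e k).symm) u

/-- `W_e := {i_1,…,i_{m_e}} ∪ pa(i_1) ∪ … ∪ pa(i_{m_e})`. -/
noncomputable def Wset {E : Type} [Fintype E] (pa : Fin n → Finset (Fin n))
    (c : Fin n → E) (e : E) : Finset (Fin n) :=
  childSet c e ∪ (childSet c e).biUnion pa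

/-- `T_k^e := {i_1,…,i_{k−1}} ∪ pa(i_1) ∪ … ∪ pa(i_k)` (indices `k` are 0-based here). -/
noncomputable def Tset {E : Type} [Fintype E] (pa : Fin n → Finset (Fin n))
    (c : Fin n → E) (e : E) (k : Fin (childSet c e).card) : Finset (Fin n) :=
  ((univ.filter (fun l => l < k)).image (ch c e)) ∪
    ((univ.filter (fun l => l ≤ k)).biUnion (fun l => pa (ch c e l)))

lemma ch_mem_W {E : Type} [Fintype E] (pa : Fin n → Finset (Fin n)) (c : Fin n → E)
    (e : E) (k : Fin (childSet c e).card) : ch c e k ∈ Wset pa c e :=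
  Finset.mem_union_left _ (ch_mem_childSet c e k)

lemma pa_subset_W {E : Type} [Fintype E] (pa : Fin n → Finset (Fin n)) (c : Fin n → E)
    (e : E) (k : Fin (childSet c e).card) : pa (ch c e k) ⊆ Wset pa c e :=
  fun j hj => Finset.mem_union_right _
    (Finset.mem_biUnion.2 ⟨ch c e k, ch_mem_childSet c e k, hj⟩)

lemma T_subset_W {E : Type} [Fintype E] (pa : Fin n → Finset (Fin n)) (c : Fin n → E)
    (e : E) (k : Fin (childSet c e).card) : Tset pa c e k ⊆ Wset pa c e := by
  intro j hj
  rcases Finset.mem_union.1 hj with h | h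
  · rcases Finset.mem_image.1 h with ⟨l, _, rfl⟩
    exact ch_mem_W pa c e l
  · rcases Finset.mem_biUnion.1 h with ⟨l, _, hl⟩
    exact pa_subset_W pa c e l hl

/-- Full joint `J(x,u)` of a quasi-Markovian PSCM. -/
noncomputable def Jfun {E : Type} [Fintype E] {X : Fin n → Type} {U : E → Type}
    [∀ i, Fintype (X i)]
    (pa : Fin n → Finset (Fin n)) (c : Fin n → E)
    (f : ∀ i, U (c i) → (∀ j : pa i, X j) → X i)
    (q : ∀ e, U e → ℝ) (x : ∀ i, X i) (u : ∀ e, U e) : ℝ :=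
  (∏ e, q e (u e)) *
    ∏ i, (if f i (u (c i)) (restr (pa i) x) = x i then (1 : ℝ) else 0)

/-- Induced endogenous distribution `Q(x) := Σ_u J(x,u)`. -/
noncomputable def Qfun {E : Type} [Fintype E] {X : Fin n → Type} {U : E → Type}
    [∀ i, Fintype (X i)] [∀ e, Fintype (U e)]
    (pa : Fin n → Finset (Fin n)) (c : Fin n → E)
    (f : ∀ i, U (c i) → (∀ j : pa i, X j) → X i)
    (q : ∀ e, U e → ℝ) (x : ∀ i, X i) : ℝ :=
  ∑ u : ∀ e, U e, Jfun pa c f q x u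


theorem restr_eq_restr_iff {X : Fin n → Type} {S : Finset (Fin n)} {x y : ∀ i, X i} :
    restr S y = restr S x ↔ ∀ j ∈ S, y j = x j :=
  ⟨fun h j hj => congrFun h ⟨j, hj⟩, fun h => funext fun j => h j j.2⟩

section Marginal

variable {X : Fin n → Type} [∀ i, Fintype (X i)]

/-- The marginal `Q_S(x↾S)`, indexed by a full configuration `x` rather than by `x↾S`. -/
noncomputable def margAt (Q : (∀ i, X i) → ℝ) (S : Finset (Fin n)) (x : ∀ i, X i) : ℝ :=
  ∑ y, if ∀ j ∈ S, y j = x j then Q y else 0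

theorem marg_restr (Q : (∀ i, X i) → ℝ) (S : Finset (Fin n)) (x : ∀ i, X i) :
    marg Q S (restr S x) = margAt Q S x := by
  simp only [marg, margAt, restr_eq_restr_iff]

theorem cpr_restr (Q : (∀ i, X i) → ℝ) (i : Fin n) (S : Finset (Fin n)) (x : ∀ i, X i) :
    cpr Q i S (x i) (restr S x) = margAt Q (insert i S) x / margAt Q S x := by
  simp only [cpr, marg_restr, margAt, restr_eq_restr_iff, forall_mem_insert]

theorem margAt_univ (Q : (∀ i, X i) → ℝ) (x : ∀ i, X i) : margAt Q univ x = Q x := by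
  simp [margAt, ← funext_iff]

theorem margAt_pos {Q : (∀ i, X i) → ℝ} (hQ : ∀ y, 0 < Q y) (S : Finset (Fin n))
    (x : ∀ i, X i) : 0 < margAt Q S x :=
  calc 0 < Q x := hQ x
    _ = if ∀ j ∈ S, x j = x j then Q x else 0 := by simp
    _ ≤ margAt Q S x :=
      single_le_sum (f := fun y => if ∀ j ∈ S, y j = x j then Q y else 0)
        (fun y _ => by split_ifs <;> [exact (hQ y).le; rfl]) (mem_univ x)

theorem margAt_eq_sum_update {i : Fin n} {S : Finset (Fin n)} (hi : i ∉ S)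
    (Q : (∀ i, X i) → ℝ) (x : ∀ i, X i) :
    margAt Q S x = ∑ a, margAt Q (insert i S) (Function.update x i a) := by
  unfold margAt
  rw [sum_comm]
  refine sum_congr rfl fun y _ => ?_
  have hcond : ∀ a, (∀ j ∈ insert i S, y j = Function.update x i a j) ↔
      (a = y i ∧ ∀ j ∈ S, y j = x j) := fun a => by
    rw [forall_mem_insert, Function.update_self]
    refine and_congr eq_comm (forall₂_congr fun j hj => ?_)
    rw [Function.update_of_ne (ne_of_mem_of_not_mem hj hi)]
  simp only [hcond, ite_and, sum_ite_eq', mem_univ, if_true]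

theorem margAt_eq_sum_margAt {S P : Finset (Fin n)} (hSP : S ⊆ P) (Q : (∀ i, X i) → ℝ)
    (x : ∀ i, X i) :
    margAt Q S x = ∑ z, if ∀ j ∉ P \ S, z j = x j then margAt Q P z else 0 := by
  unfold margAt
  have hcomb : ∀ z : ∀ i, X i, (if ∀ j ∉ P \ S, z j = x j then
      ∑ y, (if ∀ j ∈ P, y j = z j then Q y else 0) else 0) =
      ∑ y, if (∀ j ∉ P \ S, z j = x j) ∧ ∀ j ∈ P, y j = z j then Q y else 0 := fun z => by
    simp only [ite_and, sum_ite_irrel, sum_const_zero]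
  simp only [hcomb]
  rw [sum_comm]
  refine sum_congr rfl fun y _ => ?_
  set ρ : ∀ i, X i := fun j => if j ∈ P then y j else x j
  have hcond : ∀ z : ∀ i, X i, ((∀ j ∉ P \ S, z j = x j) ∧ ∀ j ∈ P, y j = z j) ↔
      (ρ = z ∧ ∀ j ∈ S, y j = x j) := fun z => by
    constructor
    · rintro ⟨hzx, hyz⟩
      refine ⟨funext fun j => ?_,
        fun j hj => (hyz j (hSP hj)).trans (hzx j fun h => (mem_sdiff.1 h).2 hj)⟩
      by_cases hj : j ∈ P
      · simp [ρ, hj, hyz j hj]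
      · simp [ρ, hj, hzx j fun h => hj (mem_sdiff.1 h).1]
    · rintro ⟨rfl, hyx⟩
      refine ⟨fun j hj => ?_, fun j hj => by simp [ρ, hj]⟩
      by_cases hjP : j ∈ P
      · simp [ρ, hjP, hyx j (by simpa [hjP] using hj)]
      · simp [ρ, hjP]
  simp only [hcond, ite_and, sum_ite_eq, mem_univ, if_true]

end Marginal

section Below

def below (m : ℕ) : Finset (Fin n) := univ.filter fun j => (j : ℕ) < m

theorem mem_below {m : ℕ} {j : Fin n} : j ∈ below m ↔ (j : ℕ) < m := by
  simp [below]

theorem below_self : below n = (univ : Finset (Fin n)) :=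
  eq_univ_of_forall fun j => mem_below.2 j.isLt

theorem below_zero : below 0 = (∅ : Finset (Fin n)) :=
  eq_empty_of_forall_notMem fun j => by simp [mem_below]

theorem below_succ (i : Fin n) : below ((i : ℕ) + 1) = insert i (below i) := by
  ext j
  simp only [mem_below, mem_insert, Fin.ext_iff]
  omega

end Below

section Children

variable {E : Type} [Fintype E] (pa : Fin n → Finset (Fin n)) (c : Fin n → E)

theorem ch_strictMono (e : E) : StrictMono (ch c e) :=
  ((childSet c e).orderEmbOfFin rfl).strictMono

theorem exists_ch_eq {e : E} {j : Fin n} (hj : c j = e) : ∃ l, ch c e l = j := by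
  have : j ∈ Set.range ((childSet c e).orderEmbOfFin rfl) := by
    rw [range_orderEmbOfFin]
    simp [childSet, hj]
  exact this

theorem prod_eq_prod_prod_ch {M : Type*} [CommMonoid M] (g : Fin n → M) :
    ∏ i, g i = ∏ e, ∏ k : Fin (childSet c e).card, g (ch c e k) := by
  rw [← prod_fiberwise univ c g]
  refine prod_congr rfl fun e _ => ?_
  conv_lhs => rw [show ({i ∈ univ | c i = e} : Finset _) = childSet c e from rfl,
    ← map_orderEmbOfFin_univ (childSet c e) rfl, prod_map]
  rfl

theorem Tset_subset_below (hpa : ∀ i, ∀ j ∈ pa i, j < i) (e : E)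
    (k : Fin (childSet c e).card) : Tset pa c e k ⊆ below (ch c e k) := by
  intro j hj
  rw [mem_below]
  rcases mem_union.1 hj with h | h
  · obtain ⟨l, hl, rfl⟩ := mem_image.1 h
    exact ch_strictMono c e (mem_filter.1 hl).2
  · obtain ⟨l, hl, hjl⟩ := mem_biUnion.1 h
    exact lt_of_lt_of_le (hpa _ j hjl) ((ch_strictMono c e).monotone (mem_filter.1 hl).2)

theorem mem_insert_Tset_and_pa_subset_of_le {e : E} {k : Fin (childSet c e).card} {j : Fin n}
    (hj : c j = e) (hjk : j ≤ ch c e k) :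
    j ∈ insert (ch c e k) (Tset pa c e k) ∧ pa j ⊆ Tset pa c e k := by
  obtain ⟨l, rfl⟩ := exists_ch_eq c hj
  have hlk : l ≤ k := (ch_strictMono c e).le_iff_le.1 hjk
  refine ⟨?_, fun p hp => mem_union_right _ (mem_biUnion.2 ⟨l, by simp [hlk], hp⟩)⟩
  rcases hlk.lt_or_eq with hlt | rfl
  · exact mem_insert_of_mem (mem_union_left _ (mem_image.2 ⟨l, by simp [hlt], rfl⟩))
  · exact mem_insert_self _ _

end Children

section Model

variable {E : Type} {X : Fin n → Type} {U : E → Type}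
  (pa : Fin n → Finset (Fin n)) (c : Fin n → E) (f : ∀ i, U (c i) → (∀ j : pa i, X j) → X i)
  (q : ∀ e, U e → ℝ)

noncomputable def eqInd (j : Fin n) (v : U (c j)) (x : ∀ i, X i) : ℝ :=
  if f j v (restr (pa j) x) = x j then 1 else 0

variable [∀ e, Fintype (U e)]

noncomputable def componentFactor (e : E) (S : Finset (Fin n)) (x : ∀ i, X i) : ℝ :=
  ∑ w : U e, q e w * ∏ j ∈ S, if h : c j = e then eqInd pa c f j (h ▸ w) x else 1

theorem componentFactor_congr_set {e : E} {S S' : Finset (Fin n)}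
    (h : ∀ j, c j = e → (j ∈ S ↔ j ∈ S')) (x : ∀ i, X i) :
    componentFactor pa c f q e S x = componentFactor pa c f q e S' x := by
  have hfilter : ∀ T : Finset (Fin n), ∀ w : U e,
      ∏ j ∈ T, (if h : c j = e then eqInd pa c f j (h ▸ w) x else 1) =
      ∏ j ∈ T with c j = e, (if h : c j = e then eqInd pa c f j (h ▸ w) x else 1) :=
    fun T w => (prod_filter_of_ne fun j _ hj => by by_contra h; exact hj (dif_neg h)).symm
  have hS : ({j ∈ S | c j = e} : Finset (Fin n)) = {j ∈ S' | c j = e} := by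
    ext j
    simp only [mem_filter]
    exact ⟨fun hj => ⟨(h j hj.2).1 hj.1, hj.2⟩, fun hj => ⟨(h j hj.2).2 hj.1, hj.2⟩⟩
  simp only [componentFactor, hfilter S, hfilter S', hS]

theorem componentFactor_congr_config {e : E} {S : Finset (Fin n)} {x z : ∀ i, X i}
    (h : ∀ j ∈ S, c j = e → z j = x j ∧ ∀ p ∈ pa j, z p = x p) :
    componentFactor pa c f q e S z = componentFactor pa c f q e S x := by
  refine sum_congr rfl fun w _ => congrArg _ (prod_congr rfl fun j hj => ?_)
  split_ifs with hje
  · obtain ⟨hzx, hpa⟩ := h j hj hje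
    rw [eqInd, eqInd, hzx, restr_eq_restr_iff.2 hpa]
  · rfl

variable [Fintype E]

noncomputable def truncJoint (S : Finset (Fin n)) (x : ∀ i, X i) : ℝ :=
  ∑ u : ∀ e, U e, (∏ e, q e (u e)) * ∏ j ∈ S, eqInd pa c f j (u (c j)) x

theorem truncJoint_empty (hq1 : ∀ e, ∑ u, q e u = 1) (x : ∀ i, X i) :
    truncJoint pa c f q ∅ x = 1 := by
  simp [truncJoint, ← Fintype.prod_sum, hq1]

theorem truncJoint_eq_prod_componentFactor (S : Finset (Fin n)) (x : ∀ i, X i) :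
    truncJoint pa c f q S x = ∏ e, componentFactor pa c f q e S x := by
  simp only [componentFactor, Fintype.prod_sum, truncJoint, prod_mul_distrib]
  refine sum_congr rfl fun u _ => ?_
  rw [prod_comm]
  congr 1
  refine prod_congr rfl fun j _ => ?_
  rw [prod_dite_eq]
  simp

/-- The ratio `G_{i+1} / G_i` is the same at `z` and at `x`, stated without division. -/
theorem truncJoint_below_cross (e : E) (k : Fin (childSet c e).card) {x z : ∀ i, X i}
    (hz : ∀ j ∈ insert (ch c e k) (Tset pa c e k), z j = x j) :
    truncJoint pa c f q (below ((ch c e k : ℕ) + 1)) z * truncJoint pa c f q (below (ch c e k)) x =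
      truncJoint pa c f q (below ((ch c e k : ℕ) + 1)) x *
        truncJoint pa c f q (below (ch c e k)) z := by
  set i := ch c e k
  have hothers : ∀ y : ∀ i, X i, ∀ e' ∈ univ.erase e,
      componentFactor pa c f q e' (below ((i : ℕ) + 1)) y =
        componentFactor pa c f q e' (below i) y := fun y e' he' =>
    componentFactor_congr_set pa c f q (fun j hj => by
      rw [below_succ, mem_insert, or_iff_right]
      rintro rfl
      exact (mem_erase.1 he').1 (hj.symm.trans (c_ch c e k))) y
  have hlocal : ∀ m ≤ (i : ℕ) + 1, componentFactor pa c f q e (below m) z =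
      componentFactor pa c f q e (below m) x := fun m hm =>
    componentFactor_congr_config pa c f q fun j hj hje => by
      obtain ⟨hmem, hsub⟩ := mem_insert_Tset_and_pa_subset_of_le pa c (k := k) hje
        (Nat.lt_succ_iff.1 (lt_of_lt_of_le (mem_below.1 hj) hm))
      exact ⟨hz j hmem, fun p hp => hz p (mem_insert_of_mem (hsub hp))⟩
  simp only [truncJoint_eq_prod_componentFactor pa c f q _ z,
    truncJoint_eq_prod_componentFactor pa c f q _ x, ← mul_prod_erase univ _ (mem_univ e),
    prod_congr rfl (hothers z), prod_congr rfl (hothers x), hlocal _ le_rfl,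
    hlocal _ (Nat.le_succ _)]
  ring

variable [∀ i, Fintype (X i)]

theorem truncJoint_univ :
    truncJoint pa c f q univ = Qfun (X := X) pa c f q :=
  rfl

theorem sum_truncJoint_update_insert {i : Fin n} {S : Finset (Fin n)} (hi : i ∉ S)
    (hpa : ∀ j ∈ insert i S, i ∉ pa j) (x : ∀ i, X i) :
    ∑ a, truncJoint pa c f q (insert i S) (Function.update x i a) = truncJoint pa c f q S x := by
  have hrestr : ∀ j ∈ insert i S, ∀ a, restr (pa j) (Function.update x i a) = restr (pa j) x :=
    fun j hj a => funext fun p => Function.update_of_ne (ne_of_mem_of_not_mem p.2 (hpa j hj)) _ _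
  have hold : ∀ a (u : ∀ e, U e), ∏ j ∈ S, eqInd pa c f j (u (c j)) (Function.update x i a) =
      ∏ j ∈ S, eqInd pa c f j (u (c j)) x := fun a u => prod_congr rfl fun j hj => by
    rw [eqInd, eqInd, hrestr j (mem_insert_of_mem hj) a,
      Function.update_of_ne (ne_of_mem_of_not_mem hj hi)]
  have hnew : ∀ v : U (c i), ∑ a, eqInd pa c f i v (Function.update x i a) = 1 := fun v => by
    simp [eqInd, hrestr i (mem_insert_self i S)]
  simp only [truncJoint, prod_insert hi, hold]
  rw [sum_comm]
  refine sum_congr rfl fun u _ => ?_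
  simp only [← mul_assoc, mul_comm _ (eqInd pa c f i _ _), ← sum_mul, hnew, one_mul]

theorem margAt_Qfun_below (hpa : ∀ i, ∀ j ∈ pa i, j < i) {m : ℕ} (hm : m ≤ n)
    (x : ∀ i, X i) :
    margAt (Qfun pa c f q) (below m) x = truncJoint pa c f q (below m) x := by
  induction hm using Nat.decreasingInduction generalizing x with
  | self => rw [below_self, margAt_univ, truncJoint_univ]
  | of_succ m hm ih =>
    set i : Fin n := ⟨m, hm⟩
    have hi : i ∉ below i := by simp [mem_below]
    have hnotpa : ∀ j ∈ insert i (below i), i ∉ pa j := fun j hj hij => by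
      have := hpa j i hij
      simp only [mem_insert, mem_below, Fin.ext_iff] at hj
      rw [Fin.lt_def] at this
      omega
    rw [margAt_eq_sum_update hi, ← sum_truncJoint_update_insert pa c f q hi hnotpa]
    refine sum_congr rfl fun a _ => ?_
    rw [← below_succ]
    exact ih _

theorem cpr_eq_truncJoint_div (hpa : ∀ i, ∀ j ∈ pa i, j < i)
    (hQ : ∀ y, 0 < Qfun pa c f q y) (e : E) (k : Fin (childSet c e).card) (x : ∀ i, X i) :
    cpr (Qfun pa c f q) (ch c e k) (Tset pa c e k) (x (ch c e k)) (restr (Tset pa c e k) x) =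
      truncJoint pa c f q (below ((ch c e k : ℕ) + 1)) x /
        truncJoint pa c f q (below (ch c e k)) x := by
  set i := ch c e k
  set T := Tset pa c e k
  have hi : i ∉ below i := by simp [mem_below]
  have hT : T ⊆ below i := Tset_subset_below pa c hpa e k
  have hiT : insert i T ⊆ below ((i : ℕ) + 1) := by
    rw [below_succ]
    exact insert_subset_insert i hT
  have hdiff : below ((i : ℕ) + 1) \ insert i T = below i \ T := by
    ext j
    simp only [below_succ, mem_sdiff, mem_insert, not_or]
    constructor
    · rintro ⟨rfl | hj, hji, hjT⟩
      exacts [absurd rfl hji, ⟨hj, hjT⟩]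
    · rintro ⟨hj, hjT⟩
      exact ⟨Or.inr hj, fun h => hi (h ▸ hj), hjT⟩
  have hpos : 0 < truncJoint pa c f q (below i) x :=
    margAt_Qfun_below pa c f q hpa i.isLt.le x ▸ margAt_pos hQ _ x
  rw [cpr_restr, div_eq_div_iff (margAt_pos hQ _ x).ne' hpos.ne', margAt_eq_sum_margAt hiT,
    margAt_eq_sum_margAt hT, hdiff, sum_mul, mul_sum]
  refine sum_congr rfl fun z _ => ?_
  split_ifs with hz
  · rw [margAt_Qfun_below pa c f q hpa i.isLt, margAt_Qfun_below pa c f q hpa i.isLt.le]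
    refine truncJoint_below_cross pa c f q e k fun j hj => hz j ?_
    rcases mem_insert.1 hj with rfl | hjT
    exacts [fun h => hi (mem_sdiff.1 h).1, fun h => (mem_sdiff.1 h).2 hjT]
  · simp

theorem Qfun_eq_prod_truncJoint_div (hpa : ∀ i, ∀ j ∈ pa i, j < i)
    (hq1 : ∀ e, ∑ u, q e u = 1) (hQ : ∀ y, 0 < Qfun pa c f q y) (x : ∀ i, X i) :
    Qfun pa c f q x = ∏ i : Fin n,
      truncJoint pa c f q (below ((i : ℕ) + 1)) x / truncJoint pa c f q (below i) x := by
  have hpos : ∀ m ≤ n, 0 < truncJoint pa c f q (below m) x := fun m hm =>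
    margAt_Qfun_below pa c f q hpa hm x ▸ margAt_pos hQ _ x
  rw [Fin.prod_univ_eq_prod_range
      (fun m => truncJoint pa c f q (below (m + 1)) x / truncJoint pa c f q (below m) x),
    prod_range_induction _ (fun m => truncJoint pa c f q (below m) x)
      (by rw [below_zero, truncJoint_empty pa c f q hq1]) n
      fun m hm => (mul_div_cancel₀ _ (hpos m hm.le).ne').symm,
    below_self, truncJoint_univ]

end Model

theorem c_component_factorization_general
    {E : Type} [Fintype E] (X : Fin n → Type) (U : E → Type)
    [∀ i, Fintype (X i)]
    [∀ e, Fintype (U e)]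
    (pa : Fin n → Finset (Fin n)) (hpa : ∀ i, ∀ j ∈ pa i, j < i)
    (c : Fin n → E)
    (f : ∀ i, U (c i) → (∀ j : pa i, X j) → X i)
    (q : ∀ e, U e → ℝ) (hq1 : ∀ e, ∑ u, q e u = 1)
    (hQpos : ∀ x, 0 < Qfun pa c f q x) :
    ∀ x : ∀ i, X i,
      Qfun pa c f q x = ∏ e, ∏ k : Fin (childSet c e).card,
        cpr (Qfun pa c f q) (ch c e k) (Tset pa c e k)
          (x (ch c e k)) (restr (Tset pa c e k) x) := by
  intro x
  rw [Qfun_eq_prod_truncJoint_div pa c f q hpa hq1 hQpos x, prod_eq_prod_prod_ch c]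
  exact prod_congr rfl fun e _ => prod_congr rfl fun k _ =>
    (cpr_eq_truncJoint_div pa c f q hpa hQpos e k x).symm

/-- c-component factorization: the endogenous distribution of a
quasi-Markovian PSCM factorizes over the confounded components determined by the
exogenous variables. -/
theorem c_component_factorization
    {E : Type} [Fintype E] (X : Fin n → Type) (U : E → Type)
    [∀ i, Fintype (X i)] [∀ i, Nonempty (X i)]
    [∀ e, Fintype (U e)] [∀ e, Nonempty (U e)]
    (pa : Fin n → Finset (Fin n)) (hpa : ∀ i, ∀ j ∈ pa i, j < i)
    (c : Fin n → E)
    (f : ∀ i, U (c i) → (∀ j : pa i, X j) → X i)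
    (q : ∀ e, U e → ℝ) (hq0 : ∀ e u, 0 ≤ q e u) (hq1 : ∀ e, ∑ u, q e u = 1)
    (hQpos : ∀ x, 0 < Qfun pa c f q x) :
    ∀ x : ∀ i, X i,
      Qfun pa c f q x = ∏ e, ∏ k : Fin (childSet c e).card,
        cpr (Qfun pa c f q) (ch c e k) (Tset pa c e k)
          (x (ch c e k)) (restr (Tset pa c e k) x) :=
  c_component_factorization_general X U pa hpa c f q hq1 hQpos
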